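/- arXiv:math/0106095 — 5 statements merged into one kernel-verified Lean document; each statement's English description precedes it below -/
import Mathlib

section
/- For any real number a > 0 and any r, the function γ(x) = (x² − r² + a² + 1)/(2a) satisfies: the equation γ(x) = cos x has at most four solutions (counted with multiplicity) in the open interval (−π, π). -/
open Real Set

/-- One Rolle step: a zero system for `g` yields a zero system for `deriv g`
with total multiplicity one less, and with all points bounded by old points. -/
lemma rolle_step (g : ℝ → ℝ) (hg : Differentiable ℝ g) (m : ℝ → ℕ) :
    ∀ s : Finset ℝ,
      (∀ x ∈ s, x ∈ Set.Ioo (-π) π ∧ 1 ≤ m x ∧ ∀ j < m x, iteratedDeriv j g x = 0) →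
      ∃ (s' : Finset ℝ) (m' : ℝ → ℕ),
        (∀ x ∈ s', x ∈ Set.Ioo (-π) π ∧ 1 ≤ m' x ∧
            ∀ j < m' x, iteratedDeriv j (deriv g) x = 0) ∧
        ∑ x ∈ s, m x ≤ (∑ x ∈ s', m' x) + 1 ∧
        ∀ y ∈ s', ∃ x ∈ s, y ≤ x := by
  intro s
  induction s using Finset.strongInduction with
  | _ s ih =>
    intro hs
    rcases s.eq_empty_or_nonempty with rfl | hne
    · exact ⟨∅, fun _ => 0, by simp, by simp, by simp⟩
    set b := s.max' hne with hb
    have hbs : b ∈ s := s.max'_mem hne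
    obtain ⟨hbI, hb1, hbz⟩ := hs b hbs
    have hsum : ∑ x ∈ s.erase b, m x + m b = ∑ x ∈ s, m x :=
      Finset.sum_erase_add s m hbs
    have hbz' : ∀ j < m b - 1, iteratedDeriv j (deriv g) b = 0 := by
      intro j hj
      rw [← iteratedDeriv_succ']
      exact hbz (j + 1) (by omega)
    have hgb0 : g b = 0 := by
      have := hbz 0 (by omega); rwa [iteratedDeriv_zero] at this
    rcases (s.erase b).eq_empty_or_nonempty with he | hne'
    · -- single point
      have hze : ∑ x ∈ s.erase b, m x = 0 := by rw [he]; simp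
      rcases Nat.lt_or_ge (m b) 2 with h1 | h2
      · refine ⟨∅, fun _ => 0, by simp, ?_, by simp⟩
        simp only [Finset.sum_empty]
        calc ∑ x ∈ s, m x = ∑ x ∈ s.erase b, m x + m b := hsum.symm
          _ = 0 + m b := by rw [hze]
          _ ≤ 0 + 1 := by omega
      · refine ⟨{b}, fun _ => m b - 1, ?_, ?_, ?_⟩
        · intro x hx
          rw [Finset.mem_singleton] at hx
          subst hx
          refine ⟨hbI, ?_, hbz'⟩
          show 1 ≤ m b - 1
          omega
        · simp only [Finset.sum_singleton]
          show ∑ x ∈ s, m x ≤ m b - 1 + 1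
          omega
        · intro y hy
          rw [Finset.mem_singleton] at hy
          exact ⟨b, hbs, le_of_eq hy⟩
    · set b' := (s.erase b).max' hne' with hb'
      have hb's : b' ∈ s.erase b := (s.erase b).max'_mem hne'
      have hb'lt : b' < b := by
        have h1 : b' ≤ b := s.le_max' b' (Finset.mem_of_mem_erase hb's)
        have h2 : b' ≠ b := Finset.ne_of_mem_erase hb's
        exact lt_of_le_of_ne h1 h2
      obtain ⟨hb'I, hb'1, hb'z⟩ := hs b' (Finset.mem_of_mem_erase hb's)
      have hgb'0 : g b' = 0 := by
        have := hb'z 0 (by omega); rwa [iteratedDeriv_zero] at this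
      have hgb' : g b' = g b := by rw [hgb0, hgb'0]
      obtain ⟨c, hcI, hc0⟩ := exists_deriv_eq_zero hb'lt (hg.continuous.continuousOn) hgb'
      have hcIoo : c ∈ Set.Ioo (-π) π := ⟨lt_trans hb'I.1 hcI.1, lt_trans hcI.2 hbI.2⟩
      obtain ⟨rs, rm, hrs, hrsum, hrle⟩ := ih (s.erase b) (Finset.erase_ssubset hbs)
        (fun x hx => hs x (Finset.mem_of_mem_erase hx))
      have hrlt : ∀ y ∈ rs, y < c := by
        intro y hy
        obtain ⟨x, hx, hyx⟩ := hrle y hy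
        exact lt_of_le_of_lt (le_trans hyx ((s.erase b).le_max' x hx)) hcI.1
      have hcrs : c ∉ rs := fun h => lt_irrefl c (hrlt c h)
      have hc0' : ∀ j < 1, iteratedDeriv j (deriv g) c = 0 := by
        intro j hj
        obtain rfl : j = 0 := by omega
        rwa [iteratedDeriv_zero]
      rcases Nat.lt_or_ge (m b) 2 with h1 | h2
      · -- m b = 1 : just add the Rolle point
        set M : ℝ → ℕ := fun x => if x = c then 1 else rm x with hM
        have hMc : M c = 1 := if_pos rfl
        have hMr : ∀ x ∈ rs, M x = rm x := by
          intro x hx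
          have hxc : x ≠ c := fun h => hcrs (h ▸ hx)
          exact if_neg hxc
        refine ⟨insert c rs, M, ?_, ?_, ?_⟩
        · intro x hx
          rcases Finset.mem_insert.mp hx with rfl | hx
          · rw [hMc]
            exact ⟨hcIoo, le_refl _, hc0'⟩
          · rw [hMr x hx]
            exact hrs x hx
        · have e1 : ∑ x ∈ insert c rs, M x = M c + ∑ x ∈ rs, M x := Finset.sum_insert hcrs
          have e2 : ∑ x ∈ rs, M x = ∑ x ∈ rs, rm x := Finset.sum_congr rfl hMr
          omega
        · intro y hy
          rcases Finset.mem_insert.mp hy with rfl | hy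
          · exact ⟨b, hbs, le_of_lt hcI.2⟩
          · obtain ⟨x, hx, hyx⟩ := hrle y hy
            exact ⟨x, Finset.mem_of_mem_erase hx, hyx⟩
      · -- m b ≥ 2 : add Rolle point and b with multiplicity m b - 1
        have hbc : b ≠ c := fun h => lt_irrefl c (h ▸ hcI.2)
        have hbrs : b ∉ rs := fun h => lt_irrefl b (lt_trans (hrlt b h) hcI.2)
        have hbmem : b ∉ insert c rs := by
          rw [Finset.mem_insert]; push_neg; exact ⟨hbc, hbrs⟩
        set M : ℝ → ℕ := fun x => if x = b then m b - 1 else if x = c then 1 else rm x with hM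
        have hMb : M b = m b - 1 := if_pos rfl
        have hMc : M c = 1 := by
          have hcb : c ≠ b := Ne.symm hbc
          rw [hM]; simp [hcb]
        have hMr : ∀ x ∈ rs, M x = rm x := by
          intro x hx
          have hxb : x ≠ b := fun h => hbrs (h ▸ hx)
          have hxc : x ≠ c := fun h => hcrs (h ▸ hx)
          rw [hM]; simp [hxb, hxc]
        refine ⟨insert b (insert c rs), M, ?_, ?_, ?_⟩
        · intro x hx
          rcases Finset.mem_insert.mp hx with rfl | hx
          · rw [hMb]
            exact ⟨hbI, by omega, hbz'⟩
          rcases Finset.mem_insert.mp hx with rfl | hx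
          · rw [hMc]
            exact ⟨hcIoo, le_refl _, hc0'⟩
          · rw [hMr x hx]
            exact hrs x hx
        · have e1 : ∑ x ∈ insert b (insert c rs), M x = M b + ∑ x ∈ insert c rs, M x :=
            Finset.sum_insert hbmem
          have e2 : ∑ x ∈ insert c rs, M x = M c + ∑ x ∈ rs, M x := Finset.sum_insert hcrs
          have e3 : ∑ x ∈ rs, M x = ∑ x ∈ rs, rm x := Finset.sum_congr rfl hMr
          omega
        · intro y hy
          rcases Finset.mem_insert.mp hy with rfl | hy
          · exact ⟨b, hbs, le_refl _⟩
          rcases Finset.mem_insert.mp hy with rfl | hy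
          · exact ⟨b, hbs, le_of_lt hcI.2⟩
          · obtain ⟨x, hx, hyx⟩ := hrle y hy
            exact ⟨x, Finset.mem_of_mem_erase hx, hyx⟩
/-- The equation `γ(x) = cos x`, with `γ(x) = (x² − r² + a² + 1)/(2a)` and `a > 0`,
has at most four solutions counted with multiplicity in `(−π, π)`. -/
theorem stmt_0 (a r : ℝ) (ha : 0 < a) :
    ∀ (s : Finset ℝ) (m : ℝ → ℕ),
      (∀ x ∈ s, x ∈ Set.Ioo (-π) π ∧ 1 ≤ m x ∧
        ∀ j < m x, iteratedDeriv j
          (fun x : ℝ => (x ^ 2 - r ^ 2 + a ^ 2 + 1) / (2 * a) - Real.cos x) x = 0) →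
      ∑ x ∈ s, m x ≤ 4 := by
  intro s m hs
  by_contra hcon
  push_neg at hcon
  set f : ℝ → ℝ := fun x : ℝ => (x ^ 2 - r ^ 2 + a ^ 2 + 1) / (2 * a) - Real.cos x with hf
  have ha' : (0:ℝ) < a⁻¹ := inv_pos.mpr ha
  have h1 : ∀ x : ℝ, HasDerivAt f (x / a + Real.sin x) x := by
    intro x
    have hp : HasDerivAt (fun x : ℝ => x ^ 2 - r ^ 2 + a ^ 2 + 1) (2 * x) x := by
      simpa using (((hasDerivAt_pow 2 x).sub_const (r ^ 2)).add_const (a ^ 2)).add_const 1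
    have hq := hp.div_const (2 * a)
    have hd : HasDerivAt f (2 * x / (2 * a) - -Real.sin x) x := hq.sub (Real.hasDerivAt_cos x)
    convert hd using 1
    field_simp
    ring
  have hderiv1 : deriv f = fun x : ℝ => x / a + Real.sin x := funext fun x => (h1 x).deriv
  have h2 : ∀ x : ℝ, HasDerivAt (fun x : ℝ => x / a + Real.sin x) (a⁻¹ + Real.cos x) x := by
    intro x
    have hq := (hasDerivAt_id x).div_const a
    have : HasDerivAt (fun x : ℝ => x / a + Real.sin x) (1 / a + Real.cos x) x := hq.add (Real.hasDerivAt_sin x)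
    simpa [one_div] using this
  have hderiv2 : deriv (deriv f) = fun x : ℝ => a⁻¹ + Real.cos x := by
    rw [hderiv1]
    exact funext fun x => (h2 x).deriv
  have hfdiff : Differentiable ℝ f := fun x => (h1 x).differentiableAt
  have hf1diff : Differentiable ℝ (deriv f) := by
    rw [hderiv1]; exact fun x => (h2 x).differentiableAt
  obtain ⟨s1, m1, hs1, hsum1, -⟩ := rolle_step f hfdiff m s hs
  obtain ⟨s2, m2, hs2, hsum2, -⟩ := rolle_step (deriv f) hf1diff m1 s1 hs1
  rw [hderiv2] at hs2
  set g2 : ℝ → ℝ := fun x : ℝ => a⁻¹ + Real.cos x with hg2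
  -- every point of s2 has multiplicity exactly 1
  have hcosval : ∀ w ∈ s2, Real.cos w = -a⁻¹ := by
    intro w hw
    obtain ⟨-, hw1, hwz⟩ := hs2 w hw
    have := hwz 0 (by omega)
    rw [iteratedDeriv_zero] at this
    have : a⁻¹ + Real.cos w = 0 := this
    linarith
  have hmone : ∀ w ∈ s2, m2 w = 1 := by
    intro w hw
    obtain ⟨hwI, hw1, hwz⟩ := hs2 w hw
    by_contra hne
    have h2m : 2 ≤ m2 w := by omega
    have hd1 : iteratedDeriv 1 g2 w = 0 := hwz 1 (by omega)
    rw [iteratedDeriv_one] at hd1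
    have hdg2 : HasDerivAt g2 (-Real.sin w) w := (Real.hasDerivAt_cos w).const_add a⁻¹
    rw [hdg2.deriv] at hd1
    have hsin : Real.sin w = 0 := by linarith
    have hw0 : w = 0 := (Real.sin_eq_zero_iff_of_lt_of_lt hwI.1 hwI.2).mp hsin
    have := hcosval w hw
    rw [hw0, Real.cos_zero] at this
    linarith
  have hcard : 3 ≤ s2.card := by
    have : ∑ x ∈ s2, m2 x = s2.card := by
      rw [Finset.sum_congr rfl hmone]
      simp
    omega
  -- extract three distinct points
  obtain ⟨x, hx⟩ := Finset.card_pos.mp (by omega : 0 < s2.card)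
  obtain ⟨y, hy⟩ := Finset.card_pos.mp
    (by rw [Finset.card_erase_of_mem hx]; omega : 0 < (s2.erase x).card)
  obtain ⟨z, hz⟩ := Finset.card_pos.mp
    (by rw [Finset.card_erase_of_mem hy, Finset.card_erase_of_mem hx]; omega :
      0 < ((s2.erase x).erase y).card)
  have hyx : y ≠ x := Finset.ne_of_mem_erase hy
  have hzy : z ≠ y := Finset.ne_of_mem_erase hz
  have hzx : z ≠ x := Finset.ne_of_mem_erase (Finset.mem_of_mem_erase hz)
  have hys : y ∈ s2 := Finset.mem_of_mem_erase hy
  have hzs : z ∈ s2 := Finset.mem_of_mem_erase (Finset.mem_of_mem_erase hz)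
  -- equal absolute values
  have habs : ∀ w1 ∈ s2, ∀ w2 ∈ s2, |w1| = |w2| := by
    intro w1 hw1 w2 hw2
    have hI : ∀ w ∈ s2, |w| ∈ Set.Icc (0:ℝ) π := by
      intro w hw
      obtain ⟨hwI, -, -⟩ := hs2 w hw
      exact ⟨abs_nonneg w, le_of_lt (abs_lt.mpr ⟨hwI.1, hwI.2⟩)⟩
    apply Real.injOn_cos (hI w1 hw1) (hI w2 hw2)
    rw [Real.cos_abs, Real.cos_abs, hcosval w1 hw1, hcosval w2 hw2]
  have e1 : y = -x := by
    rcases abs_eq_abs.mp (habs y hys x hx) with h | h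
    · exact absurd h hyx
    · exact h
  have e2 : z = -x := by
    rcases abs_eq_abs.mp (habs z hzs x hx) with h | h
    · exact absurd h hzx
    · exact h
  exact hzy (e2.trans e1.symm)
end

section
/- Let h : ℝ → ℝ³ be the helix h(t) = (t, cos t, sin t). For any 0 < t < π, there exist a, r ∈ ℝ such that the sphere β = {p ∈ ℝ³ : p.x² + (p.y − a)² + p.z² = r²} passes through h(t) and h(−t), is tangent to the helix at both points (i.e., h'(±t) is orthogonal to the radius vector at h(±t)), and β ∩ h(ℝ) = {h(t), h(−t)}. -/
open Real

noncomputable def pt3 (x y z : ℝ) : EuclideanSpace ℝ (Fin 3) := WithLp.toLp 2 ![x, y, z]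

/-- The helix `h(t) = (t, cos t, sin t)`. -/
noncomputable def helix (t : ℝ) : EuclideanSpace ℝ (Fin 3) :=
  pt3 t (Real.cos t) (Real.sin t)

/-- The velocity vector `h'(t) = (1, −sin t, cos t)` of the helix. -/
noncomputable def helixVel (t : ℝ) : EuclideanSpace ℝ (Fin 3) :=
  pt3 1 (-Real.sin t) (Real.cos t)

/-- `x cos x < sin x` on `(0, π)`. -/
private lemma xcos_lt_sin {x : ℝ} (hx : 0 < x) (hx' : x < π) : x * Real.cos x < Real.sin x := by
  rcases lt_or_ge x (π/2) with h | h
  · have ht := Real.lt_tan hx h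
    have hc : 0 < Real.cos x := Real.cos_pos_of_mem_Ioo ⟨by linarith [Real.pi_pos], h⟩
    rw [Real.tan_eq_sin_div_cos, lt_div_iff₀ hc] at ht
    linarith
  · have hc : Real.cos x ≤ 0 := Real.cos_nonpos_of_pi_div_two_le_of_le h (by linarith [Real.pi_pos])
    have hs : 0 < Real.sin x := Real.sin_pos_of_pos_of_lt_pi hx hx'
    nlinarith

/-- `sinc` is strictly decreasing on `(0, π]`: `a sin b < b sin a`. -/
private lemma sinc_lt {a b : ℝ} (ha : 0 < a) (hab : a < b) (hb : b ≤ π) :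
    a * Real.sin b < b * Real.sin a := by
  have hanti : StrictAntiOn (fun x => Real.sin x / x) (Set.Icc a b) := by
    apply strictAntiOn_of_deriv_neg (convex_Icc a b)
    · exact (Real.continuous_sin.continuousOn).div continuousOn_id
        (fun x hx => (lt_of_lt_of_le ha hx.1).ne')
    · intro x hx
      rw [interior_Icc] at hx
      have hx0 : 0 < x := lt_trans ha hx.1
      have hxπ : x < π := lt_of_lt_of_le hx.2 hb
      have hd : HasDerivAt (fun x => Real.sin x / x) ((Real.cos x * x - Real.sin x * 1) / x ^ 2) x :=
        (Real.hasDerivAt_sin x).div (hasDerivAt_id x) (ne_of_gt hx0)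
      rw [hd.deriv]
      have := xcos_lt_sin hx0 hxπ
      have : Real.cos x * x - Real.sin x * 1 < 0 := by linarith [this]
      exact div_neg_of_neg_of_pos this (by positivity)
  have h := hanti (Set.left_mem_Icc.2 hab.le) (Set.right_mem_Icc.2 hab.le) hab
  simp only at h
  rw [div_lt_div_iff₀ (lt_trans ha hab) ha] at h
  linarith

private lemma G_hasDeriv (t s : ℝ) :
    HasDerivAt (fun s => (s^2 - t^2) * Real.sin t + 2*t*(Real.cos s - Real.cos t))
      (2*s*Real.sin t - 2*t*Real.sin s) s := by
  have h1 : HasDerivAt (fun s : ℝ => (s^2 - t^2) * Real.sin t) (2*s*Real.sin t) s := by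
    have := ((hasDerivAt_pow 2 s).sub_const (t^2)).mul_const (Real.sin t)
    simpa using this.congr_deriv (by ring)
  have h2 : HasDerivAt (fun s : ℝ => 2*t*(Real.cos s - Real.cos t)) (2*t*(-Real.sin s)) s :=
    ((Real.hasDerivAt_cos s).sub_const (Real.cos t)).const_mul (2*t)
  exact (h1.add h2).congr_deriv (by ring)

private lemma G_pos {t : ℝ} (ht : 0 < t) (ht' : t < π) :
    ∀ s : ℝ, 0 ≤ s → s ≠ t →
      0 < (s^2 - t^2) * Real.sin t + 2*t*(Real.cos s - Real.cos t) := by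
  intro s hs hst
  set G : ℝ → ℝ := fun s => (s ^ 2 - t ^ 2) * Real.sin t + 2 * t * (Real.cos s - Real.cos t)
    with hG
  have hGt : G t = 0 := by simp [hG]
  have hsint : 0 < Real.sin t := Real.sin_pos_of_pos_of_lt_pi ht ht'
  have hcont : Continuous G := by
    apply Continuous.add (by continuity) (by continuity)
  rcases lt_trichotomy s t with h | h | h
  · have hanti : StrictAntiOn G (Set.Icc 0 t) := by
      apply strictAntiOn_of_deriv_neg (convex_Icc 0 t) hcont.continuousOn
      intro x hx
      rw [interior_Icc] at hx
      rw [(G_hasDeriv t x).deriv]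
      have := sinc_lt hx.1 hx.2 ht'.le
      linarith
    have := hanti (Set.mem_Icc.2 ⟨hs, h.le⟩) (Set.right_mem_Icc.2 (le_trans hs h.le)) h
    rw [hGt] at this; exact this
  · exact absurd h hst
  · rcases le_or_gt s (2*π) with h2 | h2
    · have hmono : StrictMonoOn G (Set.Icc t (2*π)) := by
        apply strictMonoOn_of_deriv_pos (convex_Icc t (2*π)) hcont.continuousOn
        intro x hx
        rw [interior_Icc] at hx
        rw [(G_hasDeriv t x).deriv]
        have hx0 : 0 < x := lt_trans ht hx.1
        rcases lt_or_ge x π with hxπ | hxπ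
        · have := sinc_lt ht hx.1 hxπ.le
          linarith
        · obtain ⟨hxl, hxr⟩ := hx
          have hsx : Real.sin x ≤ 0 := by
            have hnn : 0 ≤ Real.sin (x - π) :=
              Real.sin_nonneg_of_nonneg_of_le_pi (by linarith) (by linarith)
            linarith [Real.sin_sub_pi x]
          nlinarith
      have := hmono (Set.left_mem_Icc.2 (by linarith [Real.pi_gt_three]))
        (Set.mem_Icc.2 ⟨h.le, h2⟩) h
      rw [hGt] at this; exact this
    · have hu0 : 0 < t/2 := by linarith
      have hu2 : t/2 < π/2 := by linarith
      have hcu : 0 < Real.cos (t/2) := Real.cos_pos_of_mem_Ioo ⟨by linarith [Real.pi_pos], hu2⟩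
      have htan : (t/2) * Real.cos (t/2) < Real.sin (t/2) :=
        xcos_lt_sin hu0 (by linarith [Real.pi_pos])
      have hsin2 : Real.sin t = 2 * Real.sin (t/2) * Real.cos (t/2) := by
        rw [show t = 2*(t/2) by ring, Real.sin_two_mul]; ring_nf
      have hcos2 : 1 + Real.cos t = 2 * Real.cos (t/2)^2 := by
        have := Real.cos_sq (t/2)
        rw [show 2*(t/2) = t by ring] at this
        linarith
      have hcs : -1 ≤ Real.cos s := Real.neg_one_le_cos s
      have hpi : 3 < π := Real.pi_gt_three
      have hs4 : 4 + t^2 < s^2 := by nlinarith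
      have hkey : 2*t*Real.cos (t/2) < (s^2 - t^2) * Real.sin (t/2) := by nlinarith
      have : 2*t*(1 + Real.cos t) < (s^2 - t^2) * Real.sin t := by
        rw [hsin2, hcos2]; nlinarith
      show 0 < (s^2 - t^2) * Real.sin t + 2*t*(Real.cos s - Real.cos t)
      nlinarith

private lemma G_eq_zero {t : ℝ} (ht : 0 < t) (ht' : t < π) {s : ℝ}
    (h : (s^2 - t^2) * Real.sin t + 2*t*(Real.cos s - Real.cos t) = 0) :
    s = t ∨ s = -t := by
  rcases le_or_gt 0 s with hs | hs
  · left
    by_contra hne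
    exact absurd h (ne_of_gt (G_pos ht ht' s hs hne))
  · right
    have h' : ((-s)^2 - t^2) * Real.sin t + 2*t*(Real.cos (-s) - Real.cos t) = 0 := by
      rw [Real.cos_neg, neg_sq]; exact h
    by_contra hne
    have hne' : -s ≠ t := fun hh => hne (by linarith)
    exact absurd h' (ne_of_gt (G_pos ht ht' (-s) (by linarith) hne'))

/-- For any `0 < t < π` there is a sphere centered on the `y`-axis through `h(t)` and
`h(−t)`, tangent to the helix at both points, meeting the helix only at those points. -/
theorem stmt_3 :
    ∀ t : ℝ, 0 < t → t < π →
      ∃ a r : ℝ,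
        helix t ∈ {p : EuclideanSpace ℝ (Fin 3) |
            (p 0) ^ 2 + (p 1 - a) ^ 2 + (p 2) ^ 2 = r ^ 2} ∧
        helix (-t) ∈ {p : EuclideanSpace ℝ (Fin 3) |
            (p 0) ^ 2 + (p 1 - a) ^ 2 + (p 2) ^ 2 = r ^ 2} ∧
        inner ℝ (helixVel t) (helix t - pt3 0 a 0) = (0 : ℝ) ∧
        inner ℝ (helixVel (-t)) (helix (-t) - pt3 0 a 0) = (0 : ℝ) ∧
        {p : EuclideanSpace ℝ (Fin 3) |
            (p 0) ^ 2 + (p 1 - a) ^ 2 + (p 2) ^ 2 = r ^ 2} ∩ Set.range helix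
          = {helix t, helix (-t)} := by
  intro t ht ht'
  have hsint : 0 < Real.sin t := Real.sin_pos_of_pos_of_lt_pi ht ht'
  set a : ℝ := -(t / Real.sin t) with ha
  have haa : a * Real.sin t = -t := by
    rw [ha]; field_simp
  set R2 : ℝ := t^2 + (Real.cos t - a)^2 + Real.sin t^2 with hR2
  have hR2nn : 0 ≤ R2 := by rw [hR2]; positivity
  have hsq : Real.sqrt R2 ^ 2 = R2 := Real.sq_sqrt hR2nn
  have hmem1 : helix t ∈ {p : EuclideanSpace ℝ (Fin 3) |
      (p 0) ^ 2 + (p 1 - a) ^ 2 + (p 2) ^ 2 = Real.sqrt R2 ^ 2} := by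
    simp only [Set.mem_setOf_eq, helix, pt3, hsq]
    simp [hR2]
  have hmem2 : helix (-t) ∈ {p : EuclideanSpace ℝ (Fin 3) |
      (p 0) ^ 2 + (p 1 - a) ^ 2 + (p 2) ^ 2 = Real.sqrt R2 ^ 2} := by
    simp only [Set.mem_setOf_eq, helix, pt3, hsq]
    simp only [Real.cos_neg, Real.sin_neg]
    simp [hR2]
  refine ⟨a, Real.sqrt R2, hmem1, hmem2, ?_, ?_, ?_⟩
  · simp only [helix, helixVel, pt3, PiLp.inner_apply, Fin.sum_univ_three,
      RCLike.inner_apply, conj_trivial]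
    simp
    nlinarith [haa]
  · simp only [helix, helixVel, pt3, PiLp.inner_apply, Fin.sum_univ_three,
      RCLike.inner_apply, conj_trivial]
    simp [Real.cos_neg, Real.sin_neg]
    nlinarith [haa]
  · ext p
    simp only [Set.mem_inter_iff, Set.mem_setOf_eq, Set.mem_range, Set.mem_insert_iff,
      Set.mem_singleton_iff]
    constructor
    · rintro ⟨hp, s, rfl⟩
      have hps : s^2 + (Real.cos s - a)^2 + Real.sin s^2 = R2 := by
        simpa [helix, pt3, hsq] using hp
      rw [hR2] at hps
      have key : s^2 - 2*a*Real.cos s = t^2 - 2*a*Real.cos t := by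
        have h1 := Real.sin_sq_add_cos_sq s
        have h2 := Real.sin_sq_add_cos_sq t
        nlinarith [hps]
      have hG0 : (s^2 - t^2) * Real.sin t + 2*t*(Real.cos s - Real.cos t) = 0 := by
        linear_combination Real.sin t * key + 2*(Real.cos s - Real.cos t) * haa
      rcases G_eq_zero ht ht' hG0 with rfl | rfl
      · exact Or.inl rfl
      · exact Or.inr rfl
    · rintro (rfl | rfl)
      · exact ⟨hmem1, t, rfl⟩
      · exact ⟨hmem2, -t, rfl⟩
end

section
/- Let h(t) = (t, cos t, sin t) and let P be a finite set of points h(t₁), …, h(tₘ) with −π < t₁ < ⋯ < tₘ < π. Then for every pair i ≠ j, there exists an open ball B in ℝ³ whose closure contains h(tᵢ) and h(tⱼ) on its boundary and contains no other point of P. Consequently, the Voronoi regions of h(tᵢ) and h(tⱼ) share a 2-dimensional face. -/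
open Real

/-- The Voronoi region of a point `p` with respect to a point set `P`. -/
def vorRegion {E : Type*} [MetricSpace E] (P : Set E) (p : E) : Set E :=
  {x | ∀ q ∈ P, dist x p ≤ dist x q}


lemma sin_sub_mul_cos_pos {x : ℝ} (h0 : 0 < x) (hπ : x ≤ π) : 0 < sin x - x * cos x := by
  have key : StrictMonoOn (fun y : ℝ => sin y - y * cos y) (Set.Icc 0 π) := by
    apply strictMonoOn_of_deriv_pos (convex_Icc 0 π)
    · fun_prop
    · intro y hy
      rw [interior_Icc] at hy
      have : deriv (fun y : ℝ => sin y - y * cos y) y = y * sin y := by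
        have h1 : HasDerivAt (fun y : ℝ => sin y - y * cos y) (cos y - (1 * cos y + y * (-sin y))) y :=
          (Real.hasDerivAt_sin y).sub ((hasDerivAt_id y).mul (Real.hasDerivAt_cos y))
        rw [h1.deriv]; ring
      rw [this]
      exact mul_pos hy.1 (Real.sin_pos_of_pos_of_lt_pi hy.1 hy.2)
  have := key (Set.mem_Icc.2 ⟨le_refl 0, Real.pi_pos.le⟩) (Set.mem_Icc.2 ⟨h0.le, hπ⟩) h0
  simpa using this

lemma sinc_strictAnti : StrictAntiOn (fun x : ℝ => sin x / x) (Set.Ioc 0 π) := by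
  apply strictAntiOn_of_deriv_neg (convex_Ioc 0 π)
  · apply ContinuousOn.div continuousOn_sin continuousOn_id
    intro x hx; exact ne_of_gt hx.1
  · intro x hx
    rw [interior_Ioc] at hx
    have hx0 : x ≠ 0 := ne_of_gt hx.1
    have : deriv (fun x : ℝ => sin x / x) x = (cos x * x - sin x * 1) / x ^ 2 := by
      have h1 : HasDerivAt (fun x : ℝ => sin x / x) ((cos x * x - sin x * 1) / x ^ 2) x :=
        (Real.hasDerivAt_sin x).div (hasDerivAt_id x) hx0
      exact h1.deriv
    rw [this]
    apply div_neg_of_neg_of_pos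
    · have := sin_sub_mul_cos_pos hx.1 hx.2.le
      nlinarith
    · positivity

lemma psi_hasDerivAt (lam y : ℝ) :
    HasDerivAt (fun y : ℝ => y ^ 2 + 2 * lam * cos y) (2 * y - 2 * lam * sin y) y := by
  have h : HasDerivAt (fun y : ℝ => y ^ 2 + 2 * lam * cos y) _ y := (hasDerivAt_pow 2 y).add ((Real.hasDerivAt_cos y).const_mul (2 * lam))
  convert h using 1
  ring

lemma psi_min {d : ℝ} (hd0 : 0 < d) (hdπ : d < π) {x : ℝ} (hx0 : 0 ≤ x) (hx2 : x < 2 * π)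
    (hxd : x ≠ d) :
    d ^ 2 + 2 * (d / sin d) * cos d < x ^ 2 + 2 * (d / sin d) * cos x := by
  set lam := d / sin d with hlam
  have hsd : 0 < sin d := Real.sin_pos_of_pos_of_lt_pi hd0 hdπ
  have hlam0 : 0 < lam := div_pos hd0 hsd
  have hcont : Continuous (fun y : ℝ => y ^ 2 + 2 * lam * cos y) := by fun_prop
  rcases lt_or_gt_of_ne hxd with hlt | hgt
  · have anti : StrictAntiOn (fun y : ℝ => y ^ 2 + 2 * lam * cos y) (Set.Icc 0 d) := by
      apply strictAntiOn_of_deriv_neg (convex_Icc 0 d) hcont.continuousOn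
      intro y hy
      rw [interior_Icc] at hy
      rw [(psi_hasDerivAt lam y).deriv]
      have hsy : 0 < sin y := Real.sin_pos_of_pos_of_lt_pi hy.1 (hy.2.trans hdπ)
      have h1 : sin d / d < sin y / y :=
        sinc_strictAnti ⟨hy.1, (hy.2.trans hdπ).le⟩ ⟨hd0, hdπ.le⟩ hy.2
      rw [div_lt_div_iff₀ hd0 hy.1] at h1
      have e : 2 * (d / sin d) * sin y = 2 * (d * sin y) / sin d := by ring
      rw [hlam, sub_neg, e, lt_div_iff₀ hsd]
      nlinarith
    exact anti ⟨hx0, hlt.le⟩ ⟨hd0.le, le_refl d⟩ hlt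
  · have mono : StrictMonoOn (fun y : ℝ => y ^ 2 + 2 * lam * cos y) (Set.Icc d (2 * π)) := by
      apply strictMonoOn_of_deriv_pos (convex_Icc d (2 * π)) hcont.continuousOn
      intro y hy
      rw [interior_Icc] at hy
      rw [(psi_hasDerivAt lam y).deriv]
      have hy0 : 0 < y := hd0.trans hy.1
      rcases lt_trichotomy y π with hyπ | hyπ | hyπ
      · have hsy : 0 < sin y := Real.sin_pos_of_pos_of_lt_pi hy0 hyπ
        have h1 : sin y / y < sin d / d :=
          sinc_strictAnti ⟨hd0, hdπ.le⟩ ⟨hy0, hyπ.le⟩ hy.1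
        rw [div_lt_div_iff₀ hy0 hd0] at h1
        have e : 2 * (d / sin d) * sin y = 2 * (d * sin y) / sin d := by ring
        rw [hlam, sub_pos, e, div_lt_iff₀ hsd]
        nlinarith
      · subst hyπ
        simp only [Real.sin_pi, mul_zero, sub_zero]
        linarith [Real.pi_pos]
      · have hsy : sin y ≤ 0 := by
          have h0 : 0 ≤ sin (y - π) :=
            Real.sin_nonneg_of_nonneg_of_le_pi (by linarith) (by linarith [hy.2])
          rw [Real.sin_sub_pi] at h0
          linarith
        nlinarith
    exact mono ⟨le_refl d, by linarith⟩ ⟨hgt.le, hx2.le⟩ hgt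

lemma dist_helix_sq (u s lam : ℝ) :
    dist (helix u) (pt3 s (-(lam * cos s)) (-(lam * sin s))) ^ 2 =
      (u - s) ^ 2 + 1 + lam ^ 2 + 2 * lam * cos (u - s) := by
  rw [EuclideanSpace.dist_eq, Real.sq_sqrt (by positivity)]
  simp only [helix, pt3, PiLp.toLp_apply, Fin.sum_univ_three, Matrix.cons_val_zero, Matrix.cons_val_one,
    Matrix.head_cons, Matrix.cons_val_two, Matrix.tail_cons, Real.dist_eq, sq_abs]
  rw [Real.cos_sub]
  nlinarith [Real.sin_sq_add_cos_sq u, Real.sin_sq_add_cos_sq s]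

lemma helix_witness {a b : ℝ} (ha : a ∈ Set.Ioo (-π) π) (hb : b ∈ Set.Ioo (-π) π) (hab : a < b) :
    ∃ c : EuclideanSpace ℝ (Fin 3), ∃ ρ : ℝ,
      dist (helix a) c = ρ ∧ dist (helix b) c = ρ ∧
      ∀ x ∈ Set.Ioo (-π) π, x ≠ a → x ≠ b → ρ < dist (helix x) c := by
  obtain ⟨ha1, ha2⟩ := ha
  obtain ⟨hb1, hb2⟩ := hb
  set s : ℝ := (a + b) / 2 with hs
  set d : ℝ := (b - a) / 2 with hd
  have hd0 : 0 < d := by rw [hd]; linarith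
  have hdπ : d < π := by rw [hd]; linarith
  set lam : ℝ := d / sin d with hlam
  set c : EuclideanSpace ℝ (Fin 3) := pt3 s (-(lam * cos s)) (-(lam * sin s)) with hc
  refine ⟨c, dist (helix a) c, rfl, ?_, ?_⟩
  · have h1 := dist_helix_sq a s lam
    have h2 := dist_helix_sq b s lam
    have has : a - s = -d := by rw [hs, hd]; ring
    have hbs : b - s = d := by rw [hs, hd]; ring
    rw [has] at h1; rw [hbs] at h2
    rw [Real.cos_neg] at h1
    have hsq : dist (helix b) c ^ 2 = dist (helix a) c ^ 2 := by rw [h1, h2]; ring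
    have := congrArg Real.sqrt hsq
    rwa [Real.sqrt_sq dist_nonneg, Real.sqrt_sq dist_nonneg] at this
  · intro x hx hxa hxb
    have h1 := dist_helix_sq a s lam
    have h2 := dist_helix_sq x s lam
    have has : a - s = -d := by rw [hs, hd]; ring
    rw [has, Real.cos_neg] at h1
    have habs0 : (0:ℝ) ≤ |x - s| := abs_nonneg _
    have habs2 : |x - s| < 2 * π := by
      rw [abs_lt]
      obtain ⟨hx1, hx2⟩ := hx
      constructor <;> [rw [hs]; rw [hs]] <;> linarith
    have habsd : |x - s| ≠ d := by
      intro h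
      rcases abs_eq hd0.le |>.mp h with h' | h'
      · exact hxb (by rw [hd, hs] at h'; linarith)
      · exact hxa (by rw [hd, hs] at h'; linarith)
    have key := psi_min hd0 hdπ habs0 habs2 habsd
    rw [Real.cos_abs, sq_abs] at key
    have hlt : dist (helix a) c ^ 2 < dist (helix x) c ^ 2 := by
      rw [h1, h2, hlam]; nlinarith [key]
    exact lt_of_pow_lt_pow_left₀ 2 dist_nonneg hlt

lemma helix_injective : Function.Injective helix := by
  intro a b h
  have := congrArg (fun v : EuclideanSpace ℝ (Fin 3) => v 0) h
  simpa [helix, pt3] using this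

lemma vor_face_dim {m : ℕ} {t : Fin m → ℝ} (hmono : StrictMono t)
    {i j : Fin m} (hij : i ≠ j)
    (c : EuclideanSpace ℝ (Fin 3)) (ρ : ℝ)
    (h1 : dist (helix (t i)) c = ρ) (h2 : dist (helix (t j)) c = ρ)
    (h3 : ∀ k : Fin m, k ≠ i → k ≠ j → ρ < dist (helix (t k)) c) :
    Module.finrank ℝ
      (affineSpan ℝ
        (vorRegion (Set.range fun k => helix (t k)) (helix (t i)) ∩
          vorRegion (Set.range fun k => helix (t k)) (helix (t j)))).direction = 2 := by
  classical
  set p := helix (t i) with hp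
  set q := helix (t j) with hq
  have hpq : p ≠ q := fun h => hij (hmono.injective (helix_injective h))
  set P : Set (EuclideanSpace ℝ (Fin 3)) := Set.range fun k => helix (t k) with hP
  set S := vorRegion P p ∩ vorRegion P q with hS
  have hpP : p ∈ P := ⟨i, rfl⟩
  have hqP : q ∈ P := ⟨j, rfl⟩
  have hSsub : S ⊆ (AffineSubspace.perpBisector p q : Set (EuclideanSpace ℝ (Fin 3))) := by
    rintro x ⟨hx1, hx2⟩
    rw [SetLike.mem_coe, AffineSubspace.mem_perpBisector_iff_dist_eq]
    exact le_antisymm (hx1 q hqP) (hx2 p hpP)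
  -- choose ε
  have hεex : ∃ ε : ℝ, 0 < ε ∧ ∀ k, k ≠ i → k ≠ j → ρ + 2 * ε ≤ dist (helix (t k)) c := by
    set F : Finset (Fin m) := Finset.univ.filter (fun k => k ≠ i ∧ k ≠ j) with hF
    rcases F.eq_empty_or_nonempty with hFe | hFne
    · refine ⟨1, one_pos, fun k hk1 hk2 => ?_⟩
      exfalso
      have hmem : k ∈ F := Finset.mem_filter.mpr ⟨Finset.mem_univ k, hk1, hk2⟩
      rw [hFe] at hmem
      exact Finset.notMem_empty k hmem
    · set μ := F.inf' hFne (fun k => dist (helix (t k)) c) with hμ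
      have hρμ : ρ < μ := by
        rw [hμ, Finset.lt_inf'_iff]
        intro k hk
        obtain ⟨-, hk1, hk2⟩ := Finset.mem_filter.mp hk
        exact h3 k hk1 hk2
      refine ⟨(μ - ρ) / 2, by linarith, fun k hk1 hk2 => ?_⟩
      have hle : μ ≤ dist (helix (t k)) c :=
        Finset.inf'_le _ (Finset.mem_filter.mpr ⟨Finset.mem_univ k, hk1, hk2⟩)
      linarith
  obtain ⟨ε, hε0, hεk⟩ := hεex
  have hc_bis : c ∈ AffineSubspace.perpBisector p q := by
    rw [AffineSubspace.mem_perpBisector_iff_dist_eq, dist_comm c p, dist_comm c q, h1, h2]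
  have hcS_gen : ∀ w : EuclideanSpace ℝ (Fin 3), w ∈ (ℝ ∙ (q -ᵥ p))ᗮ → ‖w‖ ≤ ε →
      (w +ᵥ c) ∈ S := by
    intro w hw hwn
    have hx_bis : (w +ᵥ c) ∈ AffineSubspace.perpBisector p q :=
      AffineSubspace.vadd_mem_of_mem_direction
        (by rw [AffineSubspace.direction_perpBisector]; exact hw) hc_bis
    have hxeq : dist (w +ᵥ c) p = dist (w +ᵥ c) q :=
      AffineSubspace.mem_perpBisector_iff_dist_eq.mp hx_bis
    have hxc : dist (w +ᵥ c) c = ‖w‖ := dist_vadd_left w c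
    have hcp : dist c p = ρ := by rw [dist_comm, h1]
    have hxp : dist (w +ᵥ c) p ≤ ρ + ε := by
      have := dist_triangle (w +ᵥ c) c p
      rw [hxc, hcp] at this
      linarith
    have hother : ∀ k, k ≠ i → k ≠ j → dist (w +ᵥ c) p ≤ dist (w +ᵥ c) (helix (t k)) := by
      intro k hk1 hk2
      have hk := hεk k hk1 hk2
      have htri := dist_triangle c (w +ᵥ c) (helix (t k))
      rw [dist_comm c (w +ᵥ c), hxc, dist_comm c (helix (t k))] at htri
      linarith
    constructor
    · rintro q' ⟨k, rfl⟩
      rcases eq_or_ne k i with rfl | hk1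
      · exact le_refl _
      rcases eq_or_ne k j with rfl | hk2
      · exact le_of_eq hxeq
      · exact hother k hk1 hk2
    · rintro q' ⟨k, rfl⟩
      rcases eq_or_ne k i with rfl | hk1
      · exact le_of_eq hxeq.symm
      rcases eq_or_ne k j with rfl | hk2
      · exact le_refl _
      · rw [← hxeq]; exact hother k hk1 hk2
  have hcS : c ∈ S := by
    have := hcS_gen 0 (zero_mem _) (by simp [hε0.le])
    simpa using this
  have hdir_ge : (ℝ ∙ (q -ᵥ p))ᗮ ≤ (affineSpan ℝ S).direction := by
    intro v hv
    rcases eq_or_ne v 0 with rfl | hv0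
    · exact zero_mem _
    have hnv : (0:ℝ) < ‖v‖ := norm_pos_iff.mpr hv0
    set w := (ε / ‖v‖) • v with hw
    have hwmem : w ∈ (ℝ ∙ (q -ᵥ p))ᗮ := Submodule.smul_mem _ _ hv
    have hwn : ‖w‖ = ε := by
      rw [hw, norm_smul, Real.norm_eq_abs, abs_of_pos (by positivity), div_mul_cancel₀]
      exact ne_of_gt hnv
    have hxS := hcS_gen w hwmem (le_of_eq hwn)
    have hmem : w ∈ (affineSpan ℝ S).direction := by
      have h1m : (w +ᵥ c) ∈ affineSpan ℝ S := subset_affineSpan ℝ S hxS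
      have h2m : c ∈ affineSpan ℝ S := subset_affineSpan ℝ S hcS
      have := AffineSubspace.vsub_mem_direction h1m h2m
      simpa using this
    have hv_eq : v = (‖v‖ / ε) • w := by
      rw [hw, smul_smul, div_mul_div_comm, mul_comm, div_self (by positivity), one_smul]
    rw [hv_eq]
    exact Submodule.smul_mem _ _ hmem
  have hdir_le : (affineSpan ℝ S).direction ≤ (ℝ ∙ (q -ᵥ p))ᗮ := by
    rw [← AffineSubspace.direction_perpBisector]
    exact AffineSubspace.direction_le (affineSpan_le.mpr hSsub)
  have heq : (affineSpan ℝ S).direction = (ℝ ∙ (q -ᵥ p))ᗮ := le_antisymm hdir_le hdir_ge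
  rw [heq]
  have h3rank : Module.finrank ℝ (EuclideanSpace ℝ (Fin 3)) = 3 := finrank_euclideanSpace_fin
  have hspan1 : Module.finrank ℝ (ℝ ∙ (q -ᵥ p)) = 1 :=
    finrank_span_singleton (vsub_ne_zero.mpr hpq.symm)
  have := Submodule.finrank_add_finrank_orthogonal (K := (ℝ ∙ (q -ᵥ p)))
  omega

/-- For finitely many points on the helix with parameters in `(−π, π)`, every pair
of points admits an empty-circumsphere witness, and consequently the corresponding
pair of Voronoi regions intersects in a 2-dimensional set. -/
theorem stmt_4 (m : ℕ) (t : Fin m → ℝ) (hmono : StrictMono t)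
    (hrange : ∀ i, t i ∈ Set.Ioo (-π) π) :
    ∀ i j : Fin m, i ≠ j →
      (∃ (c : EuclideanSpace ℝ (Fin 3)) (ρ : ℝ),
        dist (helix (t i)) c = ρ ∧ dist (helix (t j)) c = ρ ∧
        ∀ k : Fin m, k ≠ i → k ≠ j → ρ < dist (helix (t k)) c) ∧
      Module.finrank ℝ
        (affineSpan ℝ
          (vorRegion (Set.range fun k => helix (t k)) (helix (t i)) ∩
            vorRegion (Set.range fun k => helix (t k)) (helix (t j)))).direction = 2 := by
  intro i j hij
  have key : ∃ (c : EuclideanSpace ℝ (Fin 3)) (ρ : ℝ),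
      dist (helix (t i)) c = ρ ∧ dist (helix (t j)) c = ρ ∧
      ∀ k : Fin m, k ≠ i → k ≠ j → ρ < dist (helix (t k)) c := by
    rcases hij.lt_or_gt with h | h
    · obtain ⟨c, ρ, e1, e2, e3⟩ := helix_witness (hrange i) (hrange j) (hmono h)
      exact ⟨c, ρ, e1, e2, fun k hk1 hk2 =>
        e3 (t k) (hrange k) (fun h' => hk1 (hmono.injective h'))
          (fun h' => hk2 (hmono.injective h'))⟩
    · obtain ⟨c, ρ, e1, e2, e3⟩ := helix_witness (hrange j) (hrange i) (hmono h)
      exact ⟨c, ρ, e2, e1, fun k hk1 hk2 =>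
        e3 (t k) (hrange k) (fun h' => hk2 (hmono.injective h'))
          (fun h' => hk1 (hmono.injective h'))⟩
  obtain ⟨c, ρ, e1, e2, e3⟩ := key
  exact ⟨⟨c, ρ, e1, e2, e3⟩, vor_face_dim hmono hij c ρ e1 e2 e3⟩
end

section
/- Let n ≥ 2 and Hₙ = {hₙ(t) : t ∈ ℤ} with hₙ(t) = (2πt/n, cos(2πt/n), sin(2πt/n)). Let a < b < c < d be integers with b − a = d − c = 1 and d − a ≤ n. Then the circumsphere of the four points hₙ(a), hₙ(b), hₙ(c), hₙ(d) contains no point of Hₙ in its interior, i.e., these four points form a Delaunay tetrahedron of Hₙ. -/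
open Real

noncomputable def hn (n : ℕ) (t : ℤ) : EuclideanSpace ℝ (Fin 3) :=
  pt3 (2 * π * t / n) (Real.cos (2 * π * t / n)) (Real.sin (2 * π * t / n))


lemma L1 {y : ℝ} (h0 : 0 ≤ y) (h1 : y ≤ π) : y * Real.cos y ≤ Real.sin y := by
  have key : MonotoneOn (fun z : ℝ => Real.sin z - z * Real.cos z) (Set.Icc 0 π) := by
    apply monotoneOn_of_deriv_nonneg (convex_Icc 0 π)
    · exact (Real.continuous_sin.sub (continuous_id.mul Real.continuous_cos)).continuousOn
    · intro x hx
      exact ((Real.differentiable_sin x).sub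
        ((differentiable_id.mul Real.differentiable_cos) x)).differentiableWithinAt
    · intro x hx
      rw [interior_Icc] at hx
      have hd : HasDerivAt (fun z : ℝ => Real.sin z - z * Real.cos z)
          (Real.cos x - (1 * Real.cos x + x * (-Real.sin x))) x :=
        (Real.hasDerivAt_sin x).sub ((hasDerivAt_id x).mul (Real.hasDerivAt_cos x))
      rw [hd.deriv]
      have := Real.sin_nonneg_of_nonneg_of_le_pi (le_of_lt hx.1) (le_of_lt hx.2)
      nlinarith [hx.1.le]
  have h := key (Set.mem_Icc.2 ⟨le_refl 0, Real.pi_pos.le⟩) (Set.mem_Icc.2 ⟨h0, h1⟩) h0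
  simp at h
  linarith

lemma L2 {x y : ℝ} (hx : 0 < x) (hxy : x ≤ y) (hy : y ≤ π) :
    x * Real.sin y ≤ y * Real.sin x := by
  have key : MonotoneOn (fun z : ℝ => Real.sin x * z - x * Real.sin z) (Set.Icc x π) := by
    apply monotoneOn_of_deriv_nonneg (convex_Icc x π)
    · exact ((continuous_const.mul continuous_id).sub
        (continuous_const.mul Real.continuous_sin)).continuousOn
    · intro z hz
      exact (((differentiable_const _).mul differentiable_id).sub
        ((differentiable_const _).mul Real.differentiable_sin) z).differentiableWithinAt
    · intro z hz
      rw [interior_Icc] at hz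
      have hd : HasDerivAt (fun z : ℝ => Real.sin x * z - x * Real.sin z)
          (Real.sin x * 1 - x * Real.cos z) z :=
        ((hasDerivAt_id z).const_mul (Real.sin x)).sub ((Real.hasDerivAt_sin z).const_mul x)
      rw [hd.deriv]
      have hcz : Real.cos z ≤ Real.cos x :=
        Real.cos_le_cos_of_nonneg_of_le_pi hx.le hz.2.le hz.1.le
      have h1 := L1 hx.le (hxy.trans hy)
      nlinarith
  have h := key (Set.mem_Icc.2 ⟨le_refl x, hxy.trans hy⟩) (Set.mem_Icc.2 ⟨hxy, hy⟩) hxy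
  simp only [] at h
  nlinarith

lemma bridge {α β : ℝ} (hβ : 0 < β) (hβα : β ≤ α) (hα : α ≤ π) :
    α * β * Real.sin (α + β) ≤ (α + β) * (Real.sin α * Real.sin β) := by
  have hβπ : β ≤ π := hβα.trans hα
  have hsa : 0 ≤ Real.sin α := Real.sin_nonneg_of_nonneg_of_le_pi (hβ.le.trans hβα) hα
  have hsb : 0 ≤ Real.sin β := Real.sin_nonneg_of_nonneg_of_le_pi hβ.le hβπ
  have h1 : β * Real.cos β ≤ Real.sin β := L1 hβ.le hβπ
  have h2 : α * Real.cos α ≤ Real.sin α := L1 (hβ.le.trans hβα) hα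
  have hα0 : 0 ≤ α := hβ.le.trans hβα
  have t1 : α * Real.sin α * (β * Real.cos β) ≤ α * Real.sin α * Real.sin β :=
    mul_le_mul_of_nonneg_left h1 (mul_nonneg hα0 hsa)
  have t2 : β * Real.sin β * (α * Real.cos α) ≤ β * Real.sin β * Real.sin α :=
    mul_le_mul_of_nonneg_left h2 (mul_nonneg hβ.le hsb)
  rw [Real.sin_add]
  nlinarith [t1, t2]

lemma lemO {S q : ℝ} (hS0 : 0 < S) (hSπ : S ≤ π) (hq : 0 ≤ q) :
    S * (Real.sin (S + q) * Real.sin q) ≤ q * (S + q) * Real.sin S := by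
  have hsS : 0 ≤ Real.sin S := Real.sin_nonneg_of_nonneg_of_le_pi hS0.le hSπ
  rcases le_or_gt (Real.sin (S + q) * Real.sin q) 0 with hprod | hprod
  · calc S * (Real.sin (S + q) * Real.sin q) ≤ 0 := mul_nonpos_of_nonneg_of_nonpos hS0.le hprod
      _ ≤ q * (S + q) * Real.sin S := by positivity
  · rcases le_or_gt (S + q) π with hcase | hcase
    · -- S + q ≤ π
      have hsq : 0 ≤ Real.sin q := Real.sin_nonneg_of_nonneg_of_le_pi hq (by linarith)
      have hsSq : 0 ≤ Real.sin (S + q) := Real.sin_nonneg_of_nonneg_of_le_pi (by linarith) hcase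
      have hL2 : S * Real.sin (S + q) ≤ (S + q) * Real.sin S := L2 hS0 (by linarith) hcase
      have hqle : Real.sin q ≤ q := Real.sin_le hq
      have t1 : S * Real.sin (S + q) * Real.sin q ≤ (S + q) * Real.sin S * Real.sin q :=
        mul_le_mul_of_nonneg_right hL2 hsq
      have t2 : (S + q) * Real.sin S * Real.sin q ≤ (S + q) * Real.sin S * q :=
        mul_le_mul_of_nonneg_left hqle (mul_nonneg (by linarith) hsS)
      nlinarith [t1, t2]
    · -- S + q > π ; show q > π
      have hqπ : π < q := by
        by_contra hqπ
        push_neg at hqπ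
        have hsq : 0 ≤ Real.sin q := Real.sin_nonneg_of_nonneg_of_le_pi hq hqπ
        have h2π : S + q - π ≤ π := by linarith
        have : Real.sin (S + q) ≤ 0 := by
          have : 0 ≤ Real.sin (S + q - π) :=
            Real.sin_nonneg_of_nonneg_of_le_pi (by linarith) h2π
          have heq : Real.sin (S + q - π) = -Real.sin (S + q) := Real.sin_sub_pi (S + q)
          linarith [heq ▸ this]
        nlinarith
      -- product-to-sum bound
      have hid : Real.sin (S + q) * Real.sin q = (Real.cos S - Real.cos (S + 2*q)) / 2 := by
        have := Real.cos_sub_cos S (S + 2*q)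
        have h1 : (S + (S + 2*q))/2 = S + q := by ring
        have h2 : (S - (S + 2*q))/2 = -q := by ring
        rw [h1, h2, Real.sin_neg] at this
        linarith
      have hcos1 : Real.cos S - Real.cos (S + 2*q) ≤ Real.cos S + 1 := by
        have := Real.neg_one_le_cos (S + 2*q)
        linarith
      have hhalf : Real.cos S + 1 = 2 * Real.cos (S/2)^2 := by
        have := Real.cos_sq (S/2)
        have h : 2 * (S/2) = S := by ring
        rw [h] at this
        linarith
      have hcoshalf : 0 ≤ Real.cos (S/2) :=
        Real.cos_nonneg_of_mem_Icc ⟨by linarith [Real.pi_pos], by linarith⟩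
      have hsinhalf : (S/2) * Real.cos (S/2) ≤ Real.sin (S/2) := L1 (by linarith) (by linarith)
      have hsinS : Real.sin S = 2 * Real.sin (S/2) * Real.cos (S/2) := by
        have := Real.sin_two_mul (S/2)
        have h : 2 * (S/2) = S := by ring
        rw [h] at this
        exact this
      have hqq : 1 ≤ q * (S + q) := by nlinarith [Real.pi_gt_three]
      have hsh : 0 ≤ Real.sin (S/2) :=
        Real.sin_nonneg_of_nonneg_of_le_pi (by linarith) (by linarith)
      -- S * prod ≤ S * cos(S/2)^2 ≤ 2 sin(S/2) cos(S/2) ≤ q(S+q) * sinS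
      rw [hid, hsinS]
      nlinarith [mul_nonneg hsh hcoshalf, sq_nonneg (Real.cos (S/2))]

lemma lemI {α β r : ℝ} (hβ : 0 < β) (hβα : β ≤ α) (hα : α ≤ π) (hsum : α + β ≤ π)
    (hr0 : 0 ≤ r) (hr : 2 * r ≤ α - β) :
    (α - r) * (β + r) * (Real.sin α * Real.sin β) ≤
      α * β * (Real.sin (α - r) * Real.sin (β + r)) := by
  set N : ℝ → ℝ := fun x =>
    α * β * (Real.sin (α - x) * Real.sin (β + x)) - (α - x) * (β + x) * (Real.sin α * Real.sin β)
    with hN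
  have hd : ∀ x : ℝ, HasDerivAt N
      (α * β * Real.sin (α - β - 2*x) - (α - β - 2*x) * (Real.sin α * Real.sin β)) x := by
    intro x
    have h1 : HasDerivAt (fun x : ℝ => α - x) (-1) x := (hasDerivAt_id x).const_sub α
    have h2 : HasDerivAt (fun x : ℝ => β + x) (1) x := (hasDerivAt_id x).const_add β
    have hs1 : HasDerivAt (fun x : ℝ => Real.sin (α - x)) (Real.cos (α - x) * (-1)) x :=
      (Real.hasDerivAt_sin (α - x)).comp x h1
    have hs2 : HasDerivAt (fun x : ℝ => Real.sin (β + x)) (Real.cos (β + x) * 1) x :=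
      (Real.hasDerivAt_sin (β + x)).comp x h2
    have hP : HasDerivAt (fun x : ℝ => Real.sin (α - x) * Real.sin (β + x))
        (Real.cos (α - x) * (-1) * Real.sin (β + x) + Real.sin (α - x) * (Real.cos (β + x) * 1))
        x := hs1.mul hs2
    have hQ : HasDerivAt (fun x : ℝ => (α - x) * (β + x)) ((-1) * (β + x) + (α - x) * 1) x :=
      h1.mul h2
    have := ((hP.const_mul (α * β)).sub (hQ.mul_const (Real.sin α * Real.sin β)))
    refine this.congr_deriv ?_
    have hid : Real.sin ((α - x) - (β + x)) =
        Real.sin (α - x) * Real.cos (β + x) - Real.cos (α - x) * Real.sin (β + x) :=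
      Real.sin_sub _ _
    have he : α - β - 2*x = (α - x) - (β + x) := by ring
    rw [he, hid]
    ring
  have hmono : MonotoneOn N (Set.Icc 0 ((α - β)/2)) := by
    apply monotoneOn_of_deriv_nonneg (convex_Icc _ _)
    · exact (HasDerivAt.continuousOn (fun x _ => hd x))
    · intro x hx
      exact (hd x).differentiableAt.differentiableWithinAt
    · intro x hx
      rw [interior_Icc] at hx
      rw [(hd x).deriv]
      set w := α - β - 2*x with hw
      have hw0 : 0 < w := by simp only [hw]; linarith [hx.2]
      have hwα : w ≤ α := by simp only [hw]; linarith [hβ, hx.1]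
      have hsb : 0 ≤ Real.sin β := Real.sin_nonneg_of_nonneg_of_le_pi hβ.le (hβα.trans hα)
      have hsa : 0 ≤ Real.sin α := Real.sin_nonneg_of_nonneg_of_le_pi (hβ.le.trans hβα) hα
      have hL2 : w * Real.sin α ≤ α * Real.sin w := L2 hw0 hwα hα
      have hsinβ : Real.sin β ≤ β := Real.sin_le hβ.le
      -- w * sinα * sinβ ≤ w * sinα * β ≤ α * sin w * β
      have t1 : w * Real.sin α * Real.sin β ≤ w * Real.sin α * β :=
        mul_le_mul_of_nonneg_left hsinβ (mul_nonneg hw0.le hsa)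
      have t2 : w * Real.sin α * β ≤ α * Real.sin w * β :=
        mul_le_mul_of_nonneg_right hL2 hβ.le
      nlinarith [t1, t2]
  have h0mem : (0:ℝ) ∈ Set.Icc (0:ℝ) ((α - β)/2) := ⟨le_refl 0, by linarith⟩
  have hrmem : r ∈ Set.Icc (0:ℝ) ((α - β)/2) := ⟨hr0, by linarith⟩
  have := hmono h0mem hrmem hr0
  have hN0 : N 0 = 0 := by simp [hN]
  rw [hN0] at this
  simp only [hN] at this
  linarith

lemma core {α β p q : ℝ} (hβ : 0 < β) (hβα : β ≤ α) (hα : α ≤ π) (hsum : α + β ≤ π)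
    (hpq : p + q = α + β) (hqp : q ≤ p) (hcase : β ≤ q ∨ q ≤ 0) :
    p * q * (Real.sin α * Real.sin β) ≤ α * β * (Real.sin p * Real.sin q) := by
  rcases hcase with hin | hout
  · -- inner
    have hr0 : 0 ≤ α - p := by linarith
    have hr : 2 * (α - p) ≤ α - β := by linarith
    have := lemI hβ hβα hα hsum hr0 hr
    have hp : α - (α - p) = p := by ring
    have hq : β + (α - p) = q := by linarith
    rw [hp, hq] at this
    exact this
  · -- outer
    set S := α + β with hS
    set q0 := -q with hq0
    have hq00 : 0 ≤ q0 := by simp [hq0]; linarith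
    have hS0 : 0 < S := by simp [hS]; linarith
    have hO := lemO hS0 hsum hq00
    have hB := bridge hβ hβα hα
    have hpeq : p = S + q0 := by simp [hS, hq0]; linarith
    -- goal: p*q*(sinα sinβ) ≤ α β sin p sin q
    -- i.e. -(S+q0)*q0*(sinα sinβ) ≤ -α β sin(S+q0) sin q0
    have hsq : Real.sin q = -Real.sin q0 := by rw [hq0, Real.sin_neg, neg_neg]
    rw [hpeq, hsq]
    have key : α * β * (Real.sin (S + q0) * Real.sin q0) ≤ q0 * (S + q0) * (Real.sin α * Real.sin β) := by
      have hαβ : 0 ≤ α * β := mul_nonneg (by linarith) hβ.le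
      have hq0S : 0 ≤ q0 * (S + q0) := mul_nonneg hq00 (by linarith)
      have t1 : α * β * (S * (Real.sin (S + q0) * Real.sin q0)) ≤
          α * β * (q0 * (S + q0) * Real.sin S) := mul_le_mul_of_nonneg_left hO hαβ
      have t2 : q0 * (S + q0) * (α * β * Real.sin S) ≤
          q0 * (S + q0) * (S * (Real.sin α * Real.sin β)) := by
        apply mul_le_mul_of_nonneg_left _ hq0S
        calc α * β * Real.sin S = α * β * Real.sin (α + β) := by rw [hS]
          _ ≤ (α + β) * (Real.sin α * Real.sin β) := hB
          _ = S * (Real.sin α * Real.sin β) := by rw [hS]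
      have t3 : S * (α * β * (Real.sin (S + q0) * Real.sin q0)) ≤
          S * (q0 * (S + q0) * (Real.sin α * Real.sin β)) := by nlinarith [t1, t2]
      exact le_of_mul_le_mul_left t3 hS0
    have hq' : q = -q0 := by simp [hq0]
    rw [hq']
    nlinarith [key]

lemma dist_pt3' (x y z x' y' z' : ℝ) :
    dist (pt3 x y z) (pt3 x' y' z') =
      Real.sqrt ((x - x')^2 + (y - y')^2 + (z - z')^2) := by
  rw [EuclideanSpace.dist_eq]
  congr 1
  rw [Fin.sum_univ_three]
  simp [pt3, Real.dist_eq, sq_abs]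

lemma gg_ge {θ u v s Q : ℝ} (hθ : 0 < θ) (hv : v = u - 1) (hu : (3:ℝ)/2 ≤ u)
    (huπ : θ * u ≤ π)
    (hQ : Q * (Real.cos (θ*v) - Real.cos (θ*u)) = θ^2*(u^2 - v^2))
    (hs : |s| ≤ v ∨ u ≤ |s|) :
    θ^2*u^2 + Q*Real.cos (θ*u) ≤ θ^2*s^2 + Q*Real.cos (θ*s) := by
  set x := |s| with hxdef
  have hx0 : 0 ≤ x := abs_nonneg s
  have hcossx : Real.cos (θ*s) = Real.cos (θ*x) := by
    rcases abs_choice s with h | h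
    · rw [hxdef, h]
    · rw [hxdef, h, show θ*(-s) = -(θ*s) by ring, Real.cos_neg]
  have hsx : s^2 = x^2 := (sq_abs s).symm
  set α := θ*(u+v)/2 with hα
  set β := θ/2 with hβ
  set p := θ*(u+x)/2 with hp
  set q := θ*(u-x)/2 with hq
  have hβ0 : 0 < β := by rw [hβ]; linarith
  have hβα : β ≤ α := by rw [hβ, hα, hv]; nlinarith
  have hαu : α = θ*u - β := by rw [hα, hβ, hv]; ring
  have hαπ : α < π := by rw [hαu]; linarith
  have hα0 : 0 < α := by rw [hα, hv]; nlinarith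
  have hsum : α + β ≤ π := by rw [hαu]; linarith
  have hpqs : p + q = α + β := by rw [hp, hq, hαu, hβ]; ring
  have hqp : q ≤ p := by rw [hp, hq]; nlinarith
  have hcase : β ≤ q ∨ q ≤ 0 := by
    rcases hs with h | h
    · left; rw [hβ, hq]; nlinarith [hv]
    · right; rw [hq]; nlinarith
  have hcore := core hβ0 hβα hαπ.le hsum hpqs hqp hcase
  have hsinα : 0 < Real.sin α := Real.sin_pos_of_pos_of_lt_pi hα0 hαπ
  have hsinβ : 0 < Real.sin β := Real.sin_pos_of_pos_of_lt_pi hβ0 (by linarith)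
  -- identities
  have hΔ : Real.cos (θ*v) - Real.cos (θ*u) = 2*Real.sin α*Real.sin β := by
    rw [Real.cos_sub_cos]
    rw [show (θ*v + θ*u)/2 = α by rw [hα]; ring,
        show (θ*v - θ*u)/2 = -β by rw [hβ, hv]; ring, Real.sin_neg]
    ring
  have hC : Real.cos (θ*x) - Real.cos (θ*u) = 2*Real.sin p*Real.sin q := by
    rw [Real.cos_sub_cos]
    rw [show (θ*x + θ*u)/2 = p by rw [hp]; ring,
        show (θ*x - θ*u)/2 = -q by rw [hq]; ring, Real.sin_neg]
    ring
  have hxu : θ^2*(x^2 - u^2) = -(4*p*q) := by rw [hp, hq]; ring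
  have hαβ4 : θ^2*(u^2 - v^2) = 4*α*β := by rw [hα, hβ, hv]; ring
  have hQ2 : Q*(Real.sin α*Real.sin β) = 2*α*β := by
    rw [hΔ] at hQ
    rw [hαβ4] at hQ
    linarith
  have hpos : 0 < Real.sin α*Real.sin β := mul_pos hsinα hsinβ
  have hfinal : 0 ≤ (θ^2*x^2 + Q*Real.cos (θ*x) - (θ^2*u^2 + Q*Real.cos (θ*u)))
      * (Real.sin α*Real.sin β) := by
    have h1 : θ^2*x^2 + Q*Real.cos (θ*x) - (θ^2*u^2 + Q*Real.cos (θ*u))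
        = -(4*p*q) + Q*(2*Real.sin p*Real.sin q) := by
      linear_combination hxu + Q * hC
    rw [h1]
    have h2 : (-(4*p*q) + Q*(2*Real.sin p*Real.sin q)) * (Real.sin α*Real.sin β)
        = 4*(α*β*(Real.sin p*Real.sin q) - p*q*(Real.sin α*Real.sin β)) := by
      linear_combination (2*Real.sin p*Real.sin q) * hQ2
    rw [h2]
    linarith [hcore]
  have := (mul_nonneg_iff_of_pos_right hpos).mp hfinal
  rw [hcossx, hsx]
  linarith



/-- For integers `a < b < c < d` with `b − a = d − c = 1` and `d − a ≤ n`, the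
circumsphere of `hₙ(a), hₙ(b), hₙ(c), hₙ(d)` contains no point of `Hₙ` in its
interior, i.e. these four points form a Delaunay tetrahedron of `Hₙ`. -/
theorem stmt_7 (n : ℕ) (hn2 : 2 ≤ n) (a b c d : ℤ)
    (hab : a < b) (hbc : b < c) (hcd : c < d)
    (h1 : b - a = 1) (h2 : d - c = 1) (h3 : d - a ≤ n) :
    ∃ (o : EuclideanSpace ℝ (Fin 3)) (ρ : ℝ),
      dist (hn n a) o = ρ ∧ dist (hn n b) o = ρ ∧
      dist (hn n c) o = ρ ∧ dist (hn n d) o = ρ ∧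
      ∀ t : ℤ, ρ ≤ dist (hn n t) o := by
  have hb : b = a + 1 := by omega
  have hc : c = d - 1 := by omega
  have hk3 : (3:ℤ) ≤ d - a := by omega
  have hnR : (0:ℝ) < n := by
    have : 0 < n := by omega
    exact_mod_cast this
  set θ : ℝ := 2 * π / n with hθdef
  have hθ0 : 0 < θ := by rw [hθdef]; positivity
  set m : ℝ := ((a:ℝ) + d) / 2 with hm
  set u : ℝ := ((d:ℝ) - a) / 2 with hudef
  set v : ℝ := u - 1 with hvdef
  have hkR : (3:ℝ) ≤ (d:ℝ) - a := by exact_mod_cast hk3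
  have hknR : (d:ℝ) - a ≤ n := by exact_mod_cast h3
  have hu32 : (3:ℝ)/2 ≤ u := by rw [hudef]; linarith
  have hθuπ : θ * u ≤ π := by
    have h : θ * u = π * (((d:ℝ) - a) / n) := by rw [hθdef, hudef]; ring
    rw [h]
    have h2 : ((d:ℝ) - a)/n ≤ 1 := by rw [div_le_one hnR]; linarith
    nlinarith [Real.pi_pos]
  have hv0 : (0:ℝ) ≤ v := by rw [hvdef, hudef]; linarith
  have hθv0 : 0 ≤ θ * v := mul_nonneg hθ0.le hv0
  have hθvu : θ * v < θ * u := by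
    have : v < u := by rw [hvdef]; linarith
    exact (mul_lt_mul_iff_right₀ hθ0).mpr this
  have hΔpos : 0 < Real.cos (θ*v) - Real.cos (θ*u) :=
    sub_pos.mpr (Real.cos_lt_cos_of_nonneg_of_le_pi hθv0 hθuπ hθvu)
  set Q : ℝ := θ^2*(u^2 - v^2) / (Real.cos (θ*v) - Real.cos (θ*u)) with hQdef
  have hQ : Q * (Real.cos (θ*v) - Real.cos (θ*u)) = θ^2*(u^2 - v^2) := by
    rw [hQdef]
    field_simp
  set o : EuclideanSpace ℝ (Fin 3) :=
    pt3 (θ*m) (-(Q/2)*Real.cos (θ*m)) (-(Q/2)*Real.sin (θ*m)) with ho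
  have hdist : ∀ t : ℤ, dist (hn n t) o =
      Real.sqrt (θ^2*((t:ℝ)-m)^2 + Q*Real.cos (θ*((t:ℝ)-m)) + (1 + Q^2/4)) := by
    intro t
    have hco : 2 * π * (t:ℝ) / n = θ * t := by rw [hθdef]; ring
    simp only [hn, ho, hco]
    rw [dist_pt3']
    congr 1
    have hpy_t := Real.sin_sq_add_cos_sq (θ*t)
    have hpy_m := Real.sin_sq_add_cos_sq (θ*m)
    have hcsub : Real.cos (θ*((t:ℝ) - m)) =
        Real.cos (θ*t)*Real.cos (θ*m) + Real.sin (θ*t)*Real.sin (θ*m) := by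
      rw [show θ*((t:ℝ)-m) = θ*t - θ*m by ring, Real.cos_sub]
    rw [hcsub]
    linear_combination hpy_t + (Q^2/4) * hpy_m
  refine ⟨o, Real.sqrt (θ^2*u^2 + Q*Real.cos (θ*u) + (1 + Q^2/4)), ?_, ?_, ?_, ?_, ?_⟩
  · rw [hdist a]
    congr 1
    have ha' : (a:ℝ) - m = -u := by rw [hm, hudef]; ring
    rw [ha', show θ*(-u) = -(θ*u) by ring, Real.cos_neg]
    ring
  · rw [hdist b]
    congr 1
    have hb' : (b:ℝ) - m = -v := by
      rw [hm, hvdef, hudef, hb]; push_cast; ring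
    rw [hb', show θ*(-v) = -(θ*v) by ring, Real.cos_neg]
    linear_combination hQ
  · rw [hdist c]
    congr 1
    have hc' : (c:ℝ) - m = v := by
      rw [hm, hvdef, hudef, hc]; push_cast; ring
    rw [hc']
    linear_combination hQ
  · rw [hdist d]
    congr 1
    have hd' : (d:ℝ) - m = u := by rw [hm, hudef]; ring
    rw [hd']
  · intro t
    rw [hdist t]
    apply Real.sqrt_le_sqrt
    have hsj : (t:ℝ) - m = ((2*t - a - d : ℤ) : ℝ)/2 := by rw [hm]; push_cast; ring
    have hj : (2*t - a - d ≤ -(d-a)) ∨ (-(d-a-2) ≤ 2*t - a - d ∧ 2*t - a - d ≤ d-a-2)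
        ∨ (d-a ≤ 2*t - a - d) := by omega
    have hcases : |(t:ℝ) - m| ≤ v ∨ u ≤ |(t:ℝ) - m| := by
      rcases hj with h | h | h
      · right
        rw [le_abs]
        right
        have : ((2*t - a - d : ℤ) : ℝ) ≤ -((d:ℝ) - a) := by exact_mod_cast h
        rw [hsj, hudef]
        linarith
      · left
        have h1' : (-(d-a-2) : ℝ) ≤ ((2*t - a - d : ℤ) : ℝ) := by exact_mod_cast h.1
        have h2' : ((2*t - a - d : ℤ) : ℝ) ≤ ((d:ℝ)-a-2) := by exact_mod_cast h.2
        rw [abs_le, hsj, hvdef, hudef]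
        push_cast at h1' ⊢
        constructor <;> linarith
      · right
        rw [le_abs]
        left
        have : ((d:ℝ) - a) ≤ ((2*t - a - d : ℤ) : ℝ) := by exact_mod_cast h
        rw [hsj, hudef]
        linarith
    have := gg_ge hθ0 hvdef hu32 hθuπ hQ hcases
    linarith
end

section
/- Let n ≥ 2 and Hₙ = {hₙ(t) : t ∈ ℤ} with hₙ(t) = (2πt/n, cos(2πt/n), sin(2πt/n)). If integers a < b < c < d are such that hₙ(a), hₙ(b), hₙ(c), hₙ(d) form a Delaunay tetrahedron of Hₙ (their circumsphere contains no point of Hₙ in its interior), then b − a = d − c = 1 and d − a ≤ n. -/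
open Real

/-- Discrete maximum principle: if `g` vanishes at `b < d` and is nonnegative at
some interior point, then its discrete second difference is `≤ 0` somewhere inside. -/
lemma exists_concave (g : ℤ → ℝ) (b d k : ℤ) (hbk : b < k) (hkd : k < d)
    (hgb : g b = 0) (hgd : g d = 0) (hgk : 0 ≤ g k) :
    ∃ t, b < t ∧ t < d ∧ g (t + 1) - 2 * g t + g (t - 1) ≤ 0 := by
  by_contra hcon
  push_neg at hcon
  obtain ⟨m, hm, hmax⟩ := Finset.exists_max_image (Finset.Icc b d) g ⟨b, by simp; omega⟩
  simp only [Finset.mem_Icc] at hm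
  by_cases hmi : b < m ∧ m < d
  · have h1 := hmax (m + 1) (by simp only [Finset.mem_Icc]; omega)
    have h2 := hmax (m - 1) (by simp only [Finset.mem_Icc]; omega)
    have h3 := hcon m hmi.1 hmi.2
    linarith
  · have hgm : g m = 0 := by rcases (by omega : m = b ∨ m = d) with h | h <;> simp [h, hgb, hgd]
    have h1 := hmax (k + 1) (by simp only [Finset.mem_Icc]; omega)
    have h2 := hmax (k - 1) (by simp only [Finset.mem_Icc]; omega)
    have h3 := hcon k hbk hkd
    linarith

lemma cos_window {α θ : ℝ} (hα0 : 0 < α) (hαπ : α ≤ π) (hθ0 : 0 ≤ θ) (hθ2 : θ < 2 * π)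
    (h : Real.cos θ ≤ Real.cos α) : α ≤ θ ∧ θ ≤ 2 * π - α := by
  constructor
  · by_contra hc
    push_neg at hc
    have := Real.cos_lt_cos_of_nonneg_of_le_pi hθ0 hαπ hc
    linarith
  · by_contra hc
    push_neg at hc
    have h1 : Real.cos (2 * π - θ) = Real.cos θ := by
      rw [Real.cos_sub, Real.cos_two_pi, Real.sin_two_pi]; ring
    have h2 : Real.cos α < Real.cos (2 * π - θ) :=
      Real.cos_lt_cos_of_nonneg_of_le_pi (by linarith) hαπ (by linarith)
    linarith

lemma cos_strict {α θ : ℝ} (hα0 : 0 ≤ α) (hαπ : α ≤ π) (h1 : α < θ) (h2 : θ < 2 * π - α) :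
    Real.cos θ < Real.cos α := by
  rcases le_or_gt θ π with h | h
  · exact Real.cos_lt_cos_of_nonneg_of_le_pi hα0 h h1
  · have h3 : Real.cos (2 * π - θ) = Real.cos θ := by
      rw [Real.cos_sub, Real.cos_two_pi, Real.sin_two_pi]; ring
    have h4 : Real.cos (2 * π - θ) < Real.cos α :=
      Real.cos_lt_cos_of_nonneg_of_le_pi hα0 (by linarith) (by linarith)
    linarith

lemma delta2_trig (u s q r : ℝ) :
    (Real.cos (u + s) - q) ^ 2 + (Real.sin (u + s) - r) ^ 2 +
      ((Real.cos (u - s) - q) ^ 2 + (Real.sin (u - s) - r) ^ 2) -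
      2 * ((Real.cos u - q) ^ 2 + (Real.sin u - r) ^ 2) =
      (4 - 4 * Real.cos s) * (q * Real.cos u + r * Real.sin u) := by
  rw [Real.cos_add, Real.sin_add, Real.cos_sub, Real.sin_sub]
  linear_combination (2 * (Real.cos u ^ 2 + Real.sin u ^ 2)) * Real.sin_sq_add_cos_sq s

lemma le_neg_div {B v A : ℝ} (hB : 0 < B) (h : A + B * v ≤ 0) : v ≤ -(A / B) := by
  rw [show -(A / B) = (-A) / B from by ring, le_div_iff₀ hB]
  linarith [mul_comm v B]

lemma neg_div_le {B v A : ℝ} (hB : 0 < B) (h : 0 ≤ A + B * v) : -(A / B) ≤ v := by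
  rw [show -(A / B) = (-A) / B from by ring, div_le_iff₀ hB]
  linarith [mul_comm v B]

lemma window_lemma {c0 x v1 w v2 y φ : ℝ} (hc0 : 0 < c0) (hc1 : c0 ≤ 1)
    (hxy : y - x ≤ 2 * π)
    (h1 : x < v1) (h2 : v1 < w) (h3 : w < v2) (h4 : v2 < y)
    (hv1 : Real.cos (v1 - φ) ≤ -c0) (hv2 : Real.cos (v2 - φ) ≤ -c0)
    (hx : -c0 ≤ Real.cos (x - φ)) (hw : -c0 ≤ Real.cos (w - φ))
    (hy : -c0 ≤ Real.cos (y - φ)) : False := by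
  have hπ := Real.pi_pos
  rcases eq_or_lt_of_le hc1 with hceq | hclt
  · -- c0 = 1 : cos = -1 at v1 and v2
    have e1 : Real.cos (v1 - φ) = -1 := le_antisymm (by rw [hceq] at hv1; exact hv1) (Real.neg_one_le_cos _)
    have e2 : Real.cos (v2 - φ) = -1 := le_antisymm (by rw [hceq] at hv2; exact hv2) (Real.neg_one_le_cos _)
    obtain ⟨k1, hk1⟩ := Real.cos_eq_neg_one_iff.mp e1
    obtain ⟨k2, hk2⟩ := Real.cos_eq_neg_one_iff.mp e2
    have hd : v2 - v1 = (k2 - k1 : ℤ) * (2 * π) := by push_cast; linarith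
    have hlt : v2 - v1 < 2 * π := by linarith
    have hgt : 0 < v2 - v1 := by linarith
    rw [hd] at hlt hgt
    have hk : (0 : ℝ) < (k2 - k1 : ℤ) := by nlinarith
    have hk' : ((k2 - k1 : ℤ) : ℝ) < 1 := by nlinarith
    have : (0 : ℤ) < k2 - k1 := by exact_mod_cast hk
    have : (k2 - k1 : ℤ) < 1 := by exact_mod_cast hk'
    omega
  · set α := Real.arccos (-c0) with hα
    have hcosα : Real.cos α = -c0 := Real.cos_arccos (by linarith) (by linarith)
    have hα0 : 0 < α := Real.arccos_pos.mpr (by linarith)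
    have hαπ : α ≤ π := Real.arccos_le_pi _
    have hαlt : α < π := by
      rcases eq_or_lt_of_le hαπ with h | h
      · exfalso; rw [h] at hcosα; rw [Real.cos_pi] at hcosα; linarith
      · exact h
    have h2π : (0 : ℝ) < 2 * π := by linarith
    -- reduction to fundamental domain
    have hnorm : ∀ v : ℝ, Real.cos (v - φ) ≤ -c0 →
        ∃ k : ℤ, φ + k * (2 * π) + α ≤ v ∧ v ≤ φ + k * (2 * π) + 2 * π - α := by
      intro v hv
      refine ⟨⌊(v - φ) / (2 * π)⌋, ?_⟩
      set k := ⌊(v - φ) / (2 * π)⌋ with hk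
      have hθ0 : 0 ≤ (v - φ) - k * (2 * π) := Int.sub_floor_div_mul_nonneg (v - φ) h2π
      have hθ2 : (v - φ) - k * (2 * π) < 2 * π := Int.sub_floor_div_mul_lt (v - φ) h2π
      have hcos : Real.cos ((v - φ) - k * (2 * π)) = Real.cos (v - φ) := by
        rw [show (v - φ) - (k : ℝ) * (2 * π) = (v - φ) + (-k : ℤ) * (2 * π) by push_cast; ring,
          Real.cos_add_int_mul_two_pi]
      have := cos_window hα0 hαπ hθ0 hθ2 (by rw [hcos, hcosα]; exact hv)
      constructor <;> linarith [this.1, this.2]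
    obtain ⟨k1, hk1a, hk1b⟩ := hnorm v1 hv1
    obtain ⟨k2, hk2a, hk2b⟩ := hnorm v2 hv2
    have hblock : ∀ (z : ℝ) (k : ℤ), -c0 ≤ Real.cos (z - φ) →
        φ + k * (2 * π) + α < z → z < φ + k * (2 * π) + 2 * π - α → False := by
      intro z k hz hza hzb
      have hstr : Real.cos ((z - φ) - k * (2 * π)) < Real.cos α :=
        cos_strict (le_of_lt hα0) hαπ (by linarith) (by linarith)
      rw [show (z - φ) - (k : ℝ) * (2 * π) = (z - φ) + (-k : ℤ) * (2 * π) by push_cast; ring,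
        Real.cos_add_int_mul_two_pi, hcosα] at hstr
      linarith
    -- x is left of the k1-block
    have hxa : x ≤ φ + k1 * (2 * π) + α := by
      by_contra hc
      push_neg at hc
      exact hblock x k1 hx hc (by linarith)
    -- y is right of the k2-block
    have hyb : φ + k2 * (2 * π) + 2 * π - α ≤ y := by
      by_contra hc
      push_neg at hc
      exact hblock y k2 hy (by linarith) hc
    -- k1 < k2
    have hkk : k1 < k2 := by
      by_contra hc
      push_neg at hc
      have hcast : (k2 : ℝ) ≤ k1 := by exact_mod_cast hc
      exact hblock w k1 hw (by linarith) (by nlinarith)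
    have hcast : (1 : ℝ) ≤ (k2 : ℝ) - k1 := by
      have : (k1 : ℝ) + 1 ≤ k2 := by exact_mod_cast hkk
      linarith
    nlinarith

set_option maxHeartbeats 1000000 in
/-- If `hₙ(a), hₙ(b), hₙ(c), hₙ(d)` (with `a < b < c < d`) form a Delaunay
tetrahedron of `Hₙ` — their circumsphere contains no point of `Hₙ` in its
interior — then `b − a = d − c = 1` and `d − a ≤ n`. -/
theorem stmt_8 (n : ℕ) (hn2 : 2 ≤ n) (a b c d : ℤ)
    (hab : a < b) (hbc : b < c) (hcd : c < d)
    (hDel : ∃ (o : EuclideanSpace ℝ (Fin 3)) (ρ : ℝ),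
      dist (hn n a) o = ρ ∧ dist (hn n b) o = ρ ∧
      dist (hn n c) o = ρ ∧ dist (hn n d) o = ρ ∧
      ∀ t : ℤ, ρ ≤ dist (hn n t) o) :
    b - a = 1 ∧ d - c = 1 ∧ d - a ≤ n := by
  obtain ⟨o, ρ, hA, hB, hC, hD, hmin⟩ := hDel
  have hπ := Real.pi_pos
  have hn0 : (0 : ℝ) < (n : ℝ) := by
    have : (2 : ℝ) ≤ (n : ℝ) := by exact_mod_cast hn2
    linarith
  set s : ℝ := 2 * π / n with hs
  have hs0 : 0 < s := by positivity
  have hsπ : s ≤ π := by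
    rw [hs, div_le_iff₀ hn0]
    have : (2 : ℝ) ≤ (n : ℝ) := by exact_mod_cast hn2
    nlinarith
  set p := o 0 with hp
  set q := o 1 with hq
  set r := o 2 with hr
  set f : ℤ → ℝ := fun t =>
    (s * t - p) ^ 2 + (Real.cos (s * t) - q) ^ 2 + (Real.sin (s * t) - r) ^ 2 - ρ ^ 2 with hf
  have hdist : ∀ t : ℤ, dist (hn n t) o ^ 2 = f t + ρ ^ 2 := by
    intro t
    rw [EuclideanSpace.dist_eq, Real.sq_sqrt (by positivity)]
    rw [Fin.sum_univ_three]
    simp only [hn, pt3, Matrix.cons_val_zero, Matrix.cons_val_one, Matrix.head_cons,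
      Matrix.cons_val_two, Matrix.tail_cons]
    rw [Real.dist_eq, Real.dist_eq, Real.dist_eq]
    rw [sq_abs, sq_abs, sq_abs]
    have h1 : 2 * π * (t : ℝ) / n = s * t := by rw [hs]; ring
    rw [h1, hf]; ring
  have hρ0 : 0 ≤ ρ := hA ▸ dist_nonneg
  have hf0 : ∀ t, 0 ≤ f t := by
    intro t
    have h1 : ρ ^ 2 ≤ dist (hn n t) o ^ 2 := pow_le_pow_left₀ hρ0 (hmin t) 2
    have h2 := hdist t
    linarith
  have hzero : ∀ t : ℤ, dist (hn n t) o = ρ → f t = 0 := by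
    intro t ht
    have := hdist t
    rw [ht] at this
    linarith
  have hfa := hzero a hA
  have hfb := hzero b hB
  have hfc := hzero c hC
  have hfd := hzero d hD
  -- shift identity over one full turn
  have hsn : s * n = 2 * π := by rw [hs]; field_simp
  have hshift : ∀ t : ℤ, f (t + n) - f t = 4 * π * (s * t) + 4 * π ^ 2 - 4 * π * p := by
    intro t
    have h1 : s * ((t : ℝ) + (n : ℝ)) = s * t + 2 * π := by rw [mul_add, hsn]
    simp only [hf]
    push_cast
    rw [h1, Real.cos_add_two_pi, Real.sin_add_two_pi]
    ring
  have hda : d - a ≤ (n : ℤ) := by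
    have h1 : 0 ≤ f (a + n) - f a := by
      have := hf0 (a + n); rw [hfa]; linarith
    have h2 : f (d - n + n) - f (d - n) ≤ 0 := by
      have := hf0 (d - n)
      rw [show d - (n : ℤ) + (n : ℤ) = d from by ring, hfd]
      linarith
    rw [hshift a] at h1
    rw [hshift (d - n)] at h2
    have h3 : s * ((d - n : ℤ) : ℝ) ≤ s * (a : ℝ) := by nlinarith
    have h4 : ((d - n : ℤ) : ℝ) ≤ (a : ℝ) := le_of_mul_le_mul_left h3 hs0
    have h5 : (d - n : ℤ) ≤ a := by exact_mod_cast h4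
    omega
  -- second difference identity
  have hdelta : ∀ t : ℤ, f (t + 1) - 2 * f t + f (t - 1) =
      2 * s ^ 2 + (4 - 4 * Real.cos s) * (q * Real.cos (s * t) + r * Real.sin (s * t)) := by
    intro t
    simp only [hf]
    push_cast
    rw [show s * ((t : ℝ) + 1) = s * t + s from by ring,
      show s * ((t : ℝ) - 1) = s * t - s from by ring]
    linear_combination delta2_trig (s * t) s q r
  have hcs1 : Real.cos s < 1 := by
    have := Real.cos_lt_cos_of_nonneg_of_le_pi (le_refl 0) hsπ hs0
    rwa [Real.cos_zero] at this
  have hC4 : 0 < 4 - 4 * Real.cos s := by linarith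
  -- main contradiction engine
  have main : ∀ a' m d' t1 t2 : ℤ, a' < t1 → t1 < m → m < t2 → t2 < d' →
      d' - a' ≤ (n : ℤ) → f a' = 0 → f m = 0 → f d' = 0 →
      f (t1 + 1) - 2 * f t1 + f (t1 - 1) ≤ 0 →
      f (t2 + 1) - 2 * f t2 + f (t2 - 1) ≤ 0 → False := by
    intro a' m d' t1 t2 h1 h2 h3 h4 h5 hfa' hfm hfd' hD1 hD2
    clear hA hB hC hD hmin hdist hzero hshift hfa hfb hfc hfd hda hab hbc hcd hρ0
    rw [hdelta] at hD1 hD2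
    have ha2 : 0 ≤ f (a' + 1) - 2 * f a' + f (a' - 1) := by
      have := hf0 (a' + 1); have := hf0 (a' - 1); rw [hfa']; linarith
    have hm2 : 0 ≤ f (m + 1) - 2 * f m + f (m - 1) := by
      have := hf0 (m + 1); have := hf0 (m - 1); rw [hfm]; linarith
    have hd2 : 0 ≤ f (d' + 1) - 2 * f d' + f (d' - 1) := by
      have := hf0 (d' + 1); have := hf0 (d' - 1); rw [hfd']; linarith
    rw [hdelta] at ha2 hm2 hd2
    -- q, r not both zero
    have hqr : q ^ 2 + r ^ 2 ≠ 0 := by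
      intro hz
      have hq0 : q = 0 := by nlinarith [sq_nonneg q, sq_nonneg r]
      have hr0 : r = 0 := by nlinarith [sq_nonneg q, sq_nonneg r]
      rw [hq0, hr0] at hD1
      nlinarith
    have hqr' : 0 < q ^ 2 + r ^ 2 := lt_of_le_of_ne (by positivity) (Ne.symm hqr)
    set z : ℂ := ⟨q, r⟩ with hz
    have hzne : z ≠ 0 := by
      intro hzz
      rw [Complex.ext_iff] at hzz
      simp only [Complex.zero_re, Complex.zero_im] at hzz
      apply hqr
      rw [show q = 0 from hzz.1, show r = 0 from hzz.2]; ring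
    set Q : ℝ := Real.sqrt (q ^ 2 + r ^ 2) with hQ
    have hQ0 : 0 < Q := Real.sqrt_pos.mpr hqr'
    have habs : ‖z‖ = Q := by
      rw [Complex.norm_def, Complex.normSq_mk, hQ]
      ring_nf
    set φ : ℝ := Complex.arg z with hφ
    have hcosφ : Q * Real.cos φ = q := by
      rw [hφ, Complex.cos_arg hzne, habs]
      field_simp
      rfl
    have hsinφ : Q * Real.sin φ = r := by
      rw [hφ, Complex.sin_arg, habs]
      field_simp
      rfl
    have hwQ : ∀ u : ℝ, q * Real.cos u + r * Real.sin u = Q * Real.cos (u - φ) := by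
      intro u
      rw [Real.cos_sub, ← hcosφ, ← hsinφ]
      ring
    rw [hwQ] at hD1 hD2 ha2 hm2 hd2
    have hCQ : 0 < (4 - 4 * Real.cos s) * Q := by positivity
    have hc0pos : 0 < 2 * s ^ 2 / ((4 - 4 * Real.cos s) * Q) := by positivity
    have hassoc : ∀ u : ℝ, (4 - 4 * Real.cos s) * (Q * Real.cos u) =
        ((4 - 4 * Real.cos s) * Q) * Real.cos u := fun u => by ring
    rw [hassoc] at hD1 hD2 ha2 hm2 hd2
    have hv1 := le_neg_div hCQ hD1
    have hv2 := le_neg_div hCQ hD2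
    have hxw := neg_div_le hCQ ha2
    have hww := neg_div_le hCQ hm2
    have hyw := neg_div_le hCQ hd2
    have hc01 : 2 * s ^ 2 / ((4 - 4 * Real.cos s) * Q) ≤ 1 := by
      have := Real.neg_one_le_cos (s * (t1 : ℝ) - φ)
      linarith
    have hcast : ∀ u v : ℤ, u < v → s * (u : ℝ) < s * (v : ℝ) := by
      intro u v huv
      have : (u : ℝ) < (v : ℝ) := by exact_mod_cast huv
      nlinarith
    have hwin : s * (d' : ℝ) - s * (a' : ℝ) ≤ 2 * π := by
      have h6 : ((d' : ℝ) - (a' : ℝ)) ≤ (n : ℝ) := by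
        have : ((d' - a' : ℤ) : ℝ) ≤ ((n : ℤ) : ℝ) := by exact_mod_cast h5
        push_cast at this
        linarith
      nlinarith [hsn]
    exact window_lemma hc0pos hc01 hwin (hcast a' t1 h1) (hcast t1 m h2) (hcast m t2 h3)
      (hcast t2 d' h4) hv1 hv2 hxw hww hyw
  refine ⟨?_, ?_, hda⟩
  · by_contra hba
    have hba2 : a + 1 < b := by omega
    obtain ⟨t1, ht1a, ht1b, hD1⟩ :=
      exists_concave f a b (a + 1) (by omega) hba2 hfa hfb (hf0 (a + 1))
    obtain ⟨t2, ht2b, ht2d, hD2⟩ :=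
      exists_concave f b d c hbc hcd hfb hfd (by rw [hfc])
    exact main a b d t1 t2 ht1a ht1b ht2b ht2d hda hfa hfb hfd hD1 hD2
  · by_contra hdc
    have hdc2 : c + 1 < d := by omega
    obtain ⟨t1, ht1a, ht1c, hD1⟩ :=
      exists_concave f a c b hab hbc hfa hfc (by rw [hfb])
    obtain ⟨t2, ht2c, ht2d, hD2⟩ :=
      exists_concave f c d (c + 1) (by omega) hdc2 hfc hfd (hf0 (c + 1))
    exact main a c d t1 t2 ht1a ht1c ht2c ht2d hda hfa hfc hfd hD1 hD2
end
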